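/- Let m ≥ 1, let n > 2(m+1), let A' = {1,…,m+1}, and let p be a probability measure on the symmetric group S_n that is invariant under conjugation. Let E = {σ ∈ S_n : σ(A') ∩ A' = ∅} and assume p(E) > 0. Then for any distinct b_1,…,b_{m+1} ∈ {1,…,n}, the conditional probability p({σ : σ(1)=b_1, …, σ(m+1)=b_{m+1}} | E) equals 0 if some b_i ≤ m+1, and equals (n−2(m+1))!/(n−(m+1))! (the reciprocal of the number of injective maps from {1,…,m+1} into {m+2,…,n}) if all b_i ≥ m+2; in particular it does not depend on the choice of such b_1,…,b_{m+1}. -/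

import Mathlib

/-!
Conjugation by a permutation `ρ` that fixes `A'` pointwise preserves `p` and the event
`E = {σ | σ(A') ⊆ A'ᶜ}`, and carries the fibre `{σ ∈ E | σ(k) = c k for k ∈ A'}` onto the fibre
over `ρ ∘ c`. Any two injections `A' → A'ᶜ` are related by such a `ρ`, so all fibres of `E` over
injections have the same probability; `E` is their disjoint union, and there are
`(n - (m+1))! / (n - 2(m+1))!` of them. A fibre over a `c` that meets `A'` is empty.
-/

noncomputable section

/-- The probability of the event `P` under the probability mass function `p` on `S_n`. -/
def permProb {n : ℕ} (p : Equiv.Perm (Fin n) → ℝ) (P : Equiv.Perm (Fin n) → Prop) : ℝ :=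
  ∑ σ, Set.indicator {σ' | P σ'} p σ

open Equiv Finset Function Set

namespace Equiv.Perm

theorem exists_fixing_extending_pair {α ι : Type*} [Finite ι] {s : Set α} {f g : ι → α}
    (hf : Injective f) (hg : Injective g) (hfs : ∀ k, f k ∉ s) (hgs : ∀ k, g k ∉ s) :
    ∃ ρ : Perm α, (∀ x ∈ s, ρ x = x) ∧ ∀ k, ρ (f k) = g k := by
  classical
  obtain ⟨τ, hτ⟩ := exists_extending_pair (β := ↥sᶜ) (fun k => ⟨f k, hfs k⟩)
    (fun k => ⟨g k, hgs k⟩) (fun k l h => hf congr(Subtype.val $h))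
    (fun k l h => hg congr(Subtype.val $h))
  exact ⟨ofSubtype τ, fun x hx => ofSubtype_apply_of_not_mem τ (not_not.2 hx),
    fun k => by rw [ofSubtype_apply_of_mem τ (hfs k), hτ]⟩

theorem mem_iff_of_forall_mem_apply_eq {α : Type*} {s : Set α} {ρ : Perm α}
    (hρ : ∀ x ∈ s, ρ x = x) (y : α) : ρ y ∈ s ↔ y ∈ s := by
  refine ⟨fun h => ?_, fun h => (hρ y h).symm ▸ h⟩
  rwa [← ρ.injective (hρ _ h)]

end Equiv.Perm

theorem Nat.card_injective_forall_notMem {α ι : Type*} [Finite α] [Finite ι] (s : Set α) :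
    Nat.card {c : ι → α // Injective c ∧ ∀ k, c k ∉ s}
      = (Nat.card α - Nat.card s).descFactorial (Nat.card ι) := by
  have e : {c : ι → α // Injective c ∧ ∀ k, c k ∉ s} ≃ (ι ↪ ↥sᶜ) :=
    { toFun := fun c => ⟨fun k => ⟨c.1 k, c.2.2 k⟩, fun k l h => c.2.1 congr(Subtype.val $h)⟩
      invFun := fun f => ⟨fun k => f k, fun k l h => f.injective (Subtype.ext h), fun k => (f k).2⟩
      left_inv := fun c => rfl
      right_inv := fun f => rfl }
  have := Fintype.ofFinite α
  have := Fintype.ofFinite ι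
  classical
  simp only [Nat.card_congr e, Nat.card_eq_fintype_card, Fintype.card_embedding_eq,
    Fintype.card_compl_set]

section permProb

variable {n : ℕ} (p : Perm (Fin n) → ℝ)

theorem permProb_eq_sum_filter (P : Perm (Fin n) → Prop) [DecidablePred P] :
    permProb p P = ∑ σ with P σ, p σ := by
  simp [permProb, sum_filter, Set.indicator_apply]

theorem permProb_eq_zero {P : Perm (Fin n) → Prop} (h : ∀ σ, ¬ P σ) : permProb p P = 0 := by
  simp [permProb, h]

theorem permProb_conj (hinv : ∀ σ ρ : Perm (Fin n), p (ρ⁻¹ * σ * ρ) = p σ)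
    (P : Perm (Fin n) → Prop) (ρ : Perm (Fin n)) :
    permProb p (fun σ => P (ρ * σ * ρ⁻¹)) = permProb p P := by
  refine Fintype.sum_equiv (MulAut.conj ρ).toEquiv _ _ fun σ => ?_
  have hconj : p (ρ * σ * ρ⁻¹) = p σ := by rw [← hinv (ρ * σ * ρ⁻¹) ρ]; group
  classical
  simp only [Set.indicator_apply, Set.mem_ofPred_eq, MulEquiv.toEquiv_eq_coe,
    MulEquiv.coe_toEquiv, MulAut.conj_apply, hconj]

theorem permProb_eq_sum_fiberwise {β : Type*} [DecidableEq β] {P : Perm (Fin n) → Prop}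
    (f : Perm (Fin n) → β) (T : Finset β) (hf : ∀ σ, P σ → f σ ∈ T) :
    permProb p P = ∑ c ∈ T, permProb p (fun σ => f σ = c ∧ P σ) := by
  classical
  simp only [permProb_eq_sum_filter]
  rw [← sum_fiberwise_of_maps_to (g := f) (t := T) fun σ hσ => hf σ (mem_filter.1 hσ).2]
  refine sum_congr rfl fun c _ => sum_congr ?_ fun _ _ => rfl
  ext σ; simp [and_comm]

end permProb

section Fibers

variable {n : ℕ} {p : Perm (Fin n) → ℝ} {ι : Type*} {s : Set (Fin n)} {i : ι → Fin n}

theorem permProb_fiber_eq_zero (hi : ∀ k, i k ∈ s) {c : ι → Fin n} {k : ι} (hk : c k ∈ s) :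
    permProb p (fun σ => (∀ k, σ (i k) = c k) ∧ MapsTo σ s sᶜ) = 0 :=
  permProb_eq_zero p fun _ ⟨hσi, hσs⟩ => hσs (hi k) (hσi k ▸ hk)

theorem permProb_fiber_perm_comp (hinv : ∀ σ ρ : Perm (Fin n), p (ρ⁻¹ * σ * ρ) = p σ)
    (hi : ∀ k, i k ∈ s) {ρ : Perm (Fin n)} (hρ : ∀ x ∈ s, ρ x = x) (c : ι → Fin n) :
    permProb p (fun σ => (∀ k, σ (i k) = ρ (c k)) ∧ MapsTo σ s sᶜ)
      = permProb p (fun σ => (∀ k, σ (i k) = c k) ∧ MapsTo σ s sᶜ) := by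
  have hρinv : ∀ x ∈ s, ρ⁻¹ x = x := fun x hx => Perm.inv_eq_iff_eq.2 (hρ x hx).symm
  have hρs := Perm.mem_iff_of_forall_mem_apply_eq hρ
  refine (permProb_conj p hinv _ ρ).symm.trans (congrArg _ (funext fun σ => propext ?_))
  refine and_congr (forall_congr' fun k => ?_) (forall₂_congr fun x hx => ?_)
  · rw [Perm.mul_apply, Perm.mul_apply, hρinv _ (hi k), ρ.injective.eq_iff]
  · rw [Perm.mul_apply, Perm.mul_apply, hρinv x hx, mem_compl_iff, mem_compl_iff, hρs]

theorem permProb_fiber_eq_of_injective [Finite ι]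
    (hinv : ∀ σ ρ : Perm (Fin n), p (ρ⁻¹ * σ * ρ) = p σ) (hi : ∀ k, i k ∈ s)
    {c c' : ι → Fin n} (hc : Injective c) (hc' : Injective c')
    (hcs : ∀ k, c k ∉ s) (hcs' : ∀ k, c' k ∉ s) :
    permProb p (fun σ => (∀ k, σ (i k) = c k) ∧ MapsTo σ s sᶜ)
      = permProb p (fun σ => (∀ k, σ (i k) = c' k) ∧ MapsTo σ s sᶜ) := by
  obtain ⟨ρ, hρs, hρc⟩ := Perm.exists_fixing_extending_pair hc' hc hcs' hcs
  simp only [← hρc, permProb_fiber_perm_comp hinv hi hρs]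

theorem permProb_mapsTo_compl_eq_card_mul [Finite ι]
    (hinv : ∀ σ ρ : Perm (Fin n), p (ρ⁻¹ * σ * ρ) = p σ) (hi_inj : Injective i)
    (hi : ∀ k, i k ∈ s) {b : ι → Fin n} (hb : Injective b) (hbs : ∀ k, b k ∉ s) :
    permProb p (fun σ => MapsTo σ s sᶜ)
      = Nat.card {c : ι → Fin n // Injective c ∧ ∀ k, c k ∉ s}
        * permProb p (fun σ => (∀ k, σ (i k) = b k) ∧ MapsTo σ s sᶜ) := by
  classical
  have := Fintype.ofFinite ι
  rw [permProb_eq_sum_fiberwise p (fun σ => σ ∘ i) {c | Injective c ∧ ∀ k, c k ∉ s}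
    fun σ hσ => mem_filter.2 ⟨mem_univ _, σ.injective.comp hi_inj, fun k => hσ (hi k)⟩,
    Nat.card_eq_fintype_card, Fintype.card_subtype, ← nsmul_eq_mul, ← sum_const]
  refine sum_congr rfl fun c hc => ?_
  rw [mem_filter] at hc
  simp only [funext_iff, comp_apply]
  exact permProb_fiber_eq_of_injective hinv hi hc.2.1 hb hc.2.2 hbs

end Fibers

theorem Fin.natCard_setOf_val_lt {n m : ℕ} (h : m ≤ n) :
    Nat.card {x : Fin n | (x : ℕ) < m} = m := by
  rw [Nat.card_eq_card_toFinset]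
  simp [Fin.card_filter_val_lt, h]

theorem stmt_12 (m n : ℕ) (hn : 2 * (m + 1) < n)
    (p : Equiv.Perm (Fin n) → ℝ)
    (hinv : ∀ σ ρ : Equiv.Perm (Fin n), p (ρ⁻¹ * σ * ρ) = p σ)
    -- E = {σ : σ(A') ∩ A' = ∅} where A' = {1,…,m+1} (0-based: indices < m+1)
    (hE : 0 < permProb p (fun σ => ∀ i : Fin n, (i : ℕ) < m + 1 → m + 1 ≤ (σ i : ℕ)))
    (b : Fin (m + 1) → Fin n) (hb : Function.Injective b) :
    ((∃ k, (b k : ℕ) < m + 1) →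
      permProb p (fun σ => (∀ k : Fin (m + 1), σ (Fin.castLE (by omega) k) = b k) ∧
          (∀ i : Fin n, (i : ℕ) < m + 1 → m + 1 ≤ (σ i : ℕ)))
        / permProb p (fun σ => ∀ i : Fin n, (i : ℕ) < m + 1 → m + 1 ≤ (σ i : ℕ)) = 0) ∧
    ((∀ k, m + 1 ≤ (b k : ℕ)) →
      permProb p (fun σ => (∀ k : Fin (m + 1), σ (Fin.castLE (by omega) k) = b k) ∧
          (∀ i : Fin n, (i : ℕ) < m + 1 → m + 1 ≤ (σ i : ℕ)))
        / permProb p (fun σ => ∀ i : Fin n, (i : ℕ) < m + 1 → m + 1 ≤ (σ i : ℕ))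
      = ((n - 2 * (m + 1)).factorial : ℝ) / ((n - (m + 1)).factorial : ℝ)) := by
  have hle : m + 1 ≤ n := by omega
  set s : Set (Fin n) := {x | (x : ℕ) < m + 1}
  have hi : ∀ k : Fin (m + 1), Fin.castLE hle k ∈ s := fun k => k.2
  have hE_iff : ∀ σ : Perm (Fin n),
      (∀ i : Fin n, (i : ℕ) < m + 1 → m + 1 ≤ (σ i : ℕ)) ↔ MapsTo σ s sᶜ := fun σ => by
    simp [MapsTo, s]
  simp only [hE_iff] at hE ⊢
  refine ⟨fun ⟨k, hk⟩ => by rw [permProb_fiber_eq_zero hi hk, zero_div], fun hbs => ?_⟩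
  rw [permProb_mapsTo_compl_eq_card_mul hinv (Fin.castLE_injective hle) hi hb
      (fun k => (hbs k).not_gt)] at hE ⊢
  have hcard : Nat.card {c : Fin (m + 1) → Fin n // Injective c ∧ ∀ k, c k ∉ s}
      = (n - (m + 1)).descFactorial (m + 1) := by
    rw [Nat.card_injective_forall_notMem, Fin.natCard_setOf_val_lt hle]
    simp
  rw [hcard] at hE ⊢
  have hfact := Nat.factorial_mul_descFactorial (show m + 1 ≤ n - (m + 1) by omega)
  rw [show n - (m + 1) - (m + 1) = n - 2 * (m + 1) by omega] at hfact
  have hfiber := (pos_of_mul_pos_right hE (Nat.cast_nonneg _)).ne'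
  rw [← hfact, Nat.cast_mul]
  field_simp

end
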